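/- Bonnet's Theorem (univariate): If θ ~ N(μ, σ²) and f : ℝ → ℝ is differentiable with suitable integrability, then the derivative with respect to μ of E[f(θ)] equals E[f'(θ)]. -/

import Mathlib

/-!
Substituting `θ = y + m` turns the Gaussian expectation into `∫ f (y + m) ∂N(0, σ²)`, so the
theorem is differentiation of a translate under the integral sign. Since
`1 + |y + x| ≤ (1 + |x|) (1 + |y|)`, polynomial growth of `f'` dominates `f' (y + x)` by a
multiple of `(1 + |y|) ^ n` uniformly for `x` near `μ`, and this is integrable because a
Gaussian has moments of all orders.
-/

open MeasureTheory Real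

/-- Univariate Gaussian density of `N(μ, σ²)`. -/
noncomputable def gaussPDF (μ σ : ℝ) (θ : ℝ) : ℝ :=
  (2 * Real.pi * σ ^ 2) ^ (-(1 : ℝ) / 2) * Real.exp (-(θ - μ) ^ 2 / (2 * σ ^ 2))

open ProbabilityTheory
open scoped NNReal ENNReal

theorem one_add_abs_add_le_mul (x y : ℝ) : 1 + |x + y| ≤ (1 + |x|) * (1 + |y|) := by
  nlinarith [abs_add_le x y, abs_nonneg x, abs_nonneg y]

theorem abs_comp_add_le_of_polynomial_bound {g : ℝ → ℝ} {c : ℝ} {n : ℕ}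
    (hg : ∀ x, |g x| ≤ c * (1 + |x|) ^ n) {x r : ℝ} (hx : |x| ≤ r) (y : ℝ) :
    |g (y + x)| ≤ c * (1 + r) ^ n * (1 + |y|) ^ n := by
  have hc : 0 ≤ c := by simpa using (abs_nonneg _).trans (hg 0)
  calc |g (y + x)| ≤ c * (1 + |y + x|) ^ n := hg _
    _ ≤ c * ((1 + |y|) * (1 + r)) ^ n := by
      gcongr
      exact (one_add_abs_add_le_mul y x).trans (by gcongr)
    _ = c * (1 + r) ^ n * (1 + |y|) ^ n := by rw [mul_pow]; ring

section Translation

variable {ν : Measure ℝ} (hν : ∀ n : ℕ, Integrable (fun y : ℝ => (1 + |y|) ^ n) ν)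
include hν

theorem integrable_comp_add_of_polynomial_bound {g : ℝ → ℝ} (hg_meas : Measurable g)
    {c : ℝ} {n : ℕ} (hg : ∀ x, |g x| ≤ c * (1 + |x|) ^ n) (x : ℝ) :
    Integrable (fun y => g (y + x)) ν :=
  ((hν n).const_mul _).mono' (hg_meas.comp (measurable_add_const x)).aestronglyMeasurable
    (ae_of_all _ (abs_comp_add_le_of_polynomial_bound hg le_rfl))

theorem hasDerivAt_integral_comp_add {f f' : ℝ → ℝ} (hderiv : ∀ x, HasDerivAt f (f' x) x)
    (hf : ∃ c n, ∀ x : ℝ, |f x| ≤ c * (1 + |x|) ^ n)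
    (hf' : ∃ c n, ∀ x : ℝ, |f' x| ≤ c * (1 + |x|) ^ n) (μ : ℝ) :
    HasDerivAt (fun m => ∫ y, f (y + m) ∂ν) (∫ y, f' (y + μ) ∂ν) μ := by
  obtain ⟨c, n, hf⟩ := hf
  obtain ⟨c', n', hf'⟩ := hf'
  have hf_meas : Measurable f :=
    (continuous_iff_continuousAt.2 fun x => (hderiv x).continuousAt).measurable
  have hf'_meas : Measurable f' := by
    rw [show f' = deriv f from funext fun x => (hderiv x).deriv.symm]
    exact measurable_deriv f
  have h_bound : ∀ᵐ y ∂ν, ∀ x ∈ Metric.ball μ 1,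
      ‖f' (y + x)‖ ≤ c' * (1 + (|μ| + 1)) ^ n' * (1 + |y|) ^ n' := by
    refine ae_of_all _ fun y x hx => abs_comp_add_le_of_polynomial_bound hf' ?_ y
    rw [Metric.mem_ball, dist_eq] at hx
    linarith [abs_sub_abs_le_abs_sub x μ]
  have hF_int := integrable_comp_add_of_polynomial_bound hν hf_meas hf
  exact (hasDerivAt_integral_of_dominated_loc_of_deriv_le (Metric.ball_mem_nhds μ one_pos)
    (.of_forall fun x => (hF_int x).aestronglyMeasurable) (hF_int μ)
    (hf'_meas.comp (measurable_add_const μ)).aestronglyMeasurable h_bound ((hν n').const_mul _)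
    (ae_of_all _ fun y x _ => (hderiv (y + x)).comp_const_add y x)).2

end Translation

theorem integrable_one_add_abs_pow_gaussianReal (m : ℝ) (v : ℝ≥0) (n : ℕ) :
    Integrable (fun y : ℝ => (1 + |y|) ^ n) (gaussianReal m v) := by
  have hid : MemLp id (n : ℝ≥0∞) (gaussianReal m v) := memLp_id_gaussianReal' _ (by simp)
  refine ((memLp_const (1 : ℝ)).add hid.norm).integrable_norm_pow'.congr
    (ae_of_all _ fun y => ?_)
  simp only [Pi.add_apply, id, norm_eq_abs, abs_of_nonneg (by positivity : 0 ≤ 1 + |y|)]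

theorem gaussPDF_eq_gaussianPDFReal (m σ : ℝ) :
    gaussPDF m σ = gaussianPDFReal m (‖σ‖₊ ^ 2) := by
  ext θ
  rw [gaussPDF, gaussianPDFReal_def, NNReal.coe_pow, coe_nnnorm, norm_eq_abs, sq_abs, neg_div,
    Real.rpow_neg (by positivity), ← sqrt_eq_rpow]

theorem integral_gaussPDF_mul {σ : ℝ} (hσ : σ ≠ 0) (m : ℝ) (g : ℝ → ℝ) :
    ∫ θ, gaussPDF m σ θ * g θ = ∫ y, g (y + m) ∂gaussianReal 0 (‖σ‖₊ ^ 2) := by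
  rw [← (measurableEmbedding_addRight m).integral_map, gaussianReal_map_add_const, zero_add,
    integral_gaussianReal_eq_integral_smul (by simpa using hσ), gaussPDF_eq_gaussianPDFReal]
  rfl

/-- Bonnet's Theorem (univariate): for `θ ~ N(μ, σ²)` and differentiable `f` with `f, f'`
of at most polynomial growth, `∂/∂μ E[f(θ)] = E[f'(θ)]`. -/
theorem bonnet_univariate (μ σ : ℝ) (hσ : 0 < σ) (f f' : ℝ → ℝ)
    (hderiv : ∀ x, HasDerivAt f (f' x) x)
    (hfpoly : ∃ c n, ∀ x : ℝ, |f x| ≤ c * (1 + |x|) ^ n)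
    (hf'poly : ∃ c n, ∀ x : ℝ, |f' x| ≤ c * (1 + |x|) ^ n) :
    HasDerivAt (fun m : ℝ => ∫ θ : ℝ, gaussPDF m σ θ * f θ)
      (∫ θ : ℝ, gaussPDF μ σ θ * f' θ) μ := by
  simp_rw [integral_gaussPDF_mul hσ.ne']
  exact hasDerivAt_integral_comp_add (integrable_one_add_abs_pow_gaussianReal 0 _) hderiv
    hfpoly hf'poly μ
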